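/- arXiv:1801.02594 — 2 statements merged into one kernel-verified Lean document; each statement's English description precedes it below -/
import Mathlib

section
/- For 0 < m < 1, the function k ↦ k / T(m,k) is strictly increasing in the positive integer k, where T(m,k) = (1-m)(1-(1-m)^k)/m. -/
noncomputable def cachingT (m : ℝ) (k : ℕ) : ℝ := (1 - m) * (1 - (1 - m) ^ k) / m

/-! With q = 1 - m, the quotient k / T(m,k) equals m / (1 - m) divided by (1 - q^k) / k, the
slope of the chord from the origin of the strictly concave function x ↦ 1 - q^x; such chord
slopes strictly decrease. -/

open Set

theorem strictConvexOn_rpow_left {b : ℝ} (hb₀ : 0 < b) (hb₁ : b ≠ 1) :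
    StrictConvexOn ℝ univ fun x : ℝ => b ^ x := by
  refine ⟨convex_univ, fun x _ y _ hxy a c ha hc hac => ?_⟩
  have hlog : Real.log b ≠ 0 := Real.log_ne_zero_of_pos_of_ne_one hb₀ hb₁
  have := strictConvexOn_exp.2 (mem_univ (Real.log b * x)) (mem_univ (Real.log b * y))
    (by simpa [hlog] using hxy) ha hc hac
  simp only [Real.rpow_def_of_pos hb₀, smul_eq_mul] at this ⊢
  convert this using 2
  ring

theorem one_sub_rpow_div_strictAntiOn {q : ℝ} (hq₀ : 0 < q) (hq₁ : q ≠ 1) :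
    StrictAntiOn (fun x : ℝ => (1 - q ^ x) / x) {0}ᶜ := fun x hx y hy hxy => by
  have := (strictConvexOn_rpow_left hq₀ hq₁).secant_strict_mono (mem_univ 0) (mem_univ x)
    (mem_univ y) hx hy hxy
  simp only [Real.rpow_zero, sub_zero] at this
  show (1 - q ^ y) / y < (1 - q ^ x) / x
  rw [← neg_sub, neg_div, ← neg_sub (q ^ x), neg_div]
  exact neg_lt_neg this

theorem div_cachingT_eq (m : ℝ) (k : ℕ) :
    k / cachingT m k = m / (1 - m) / ((1 - (1 - m) ^ k) / k) := by
  -- no side conditions: both sides are `k * m * (1 - m)⁻¹ * (1 - (1 - m) ^ k)⁻¹`, even at zeros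
  simp only [cachingT, div_eq_mul_inv, mul_inv, inv_inv]
  ring

theorem div_cachingT_strictMono (m : ℝ) (hm0 : 0 < m) (hm1 : m < 1) :
    ∀ j k : ℕ, 0 < j → j < k → (j : ℝ) / cachingT m j < (k : ℝ) / cachingT m k := by
  intro j k hj hjk
  have hk : 0 < k := hj.trans hjk
  have hq₀ : 0 < 1 - m := by linarith
  have hslope := one_sub_rpow_div_strictAntiOn hq₀ (by linarith) (a := j) (b := k)
    (Nat.cast_ne_zero.2 hj.ne') (Nat.cast_ne_zero.2 hk.ne') (Nat.cast_lt.2 hjk)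
  simp only [Real.rpow_natCast] at hslope
  have hk_pos : 0 < (1 - (1 - m) ^ k) / k :=
    div_pos (sub_pos.2 (pow_lt_one₀ hq₀.le (by linarith) hk.ne')) (Nat.cast_pos.2 hk)
  rw [div_cachingT_eq, div_cachingT_eq]
  exact div_lt_div_of_pos_left (div_pos hm0 hq₀) hk_pos hslope
end

section
/- For fixed γ > 0 and 0 < m < 1, the baseline sum content delivery rate R_bl(K) = (K / T(m,K)) · e^{K/γ} E_1(K/γ) converges to γ m/(1-m) as K → ∞, where T(m,K) = (1-m)(1-(1-m)^K)/m and E_1(x) = ∫_1^∞ e^{-xt}/t dt. -/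
open MeasureTheory Real Set Filter

noncomputable def expIntE1 (x : ℝ) : ℝ := ∫ t in Ioi (1 : ℝ), Real.exp (-(x * t)) / t

/-!
Since `1/t ≤ 1` and `1/t ≥ e^{1-t}` (from `t ≤ e^{t-1}`) for `t ≥ 1`, comparing the integrand of
`E₁` with explicit exponentials gives `e^{-x}/(x+1) ≤ E₁(x) ≤ e^{-x}/x`, so `x e^x E₁(x) → 1`.
With `x = K/γ` the rate is `(γ / T(m,K)) · x e^x E₁(x)`, and `T(m,K) → (1-m)/m`.
-/

lemma exp_one_sub_le_inv {t : ℝ} (ht : 0 < t) : exp (1 - t) ≤ t⁻¹ := by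
  rw [← neg_sub, exp_neg]
  exact inv_anti₀ ht (by linarith [add_one_le_exp (t - 1)])

lemma integrableOn_exp_neg_mul_Ioi {x : ℝ} (hx : 0 < x) (c : ℝ) :
    IntegrableOn (fun t => exp (-(x * t))) (Ioi c) := by
  simpa only [neg_mul] using integrableOn_exp_mul_Ioi (neg_neg_of_pos hx) c

lemma integral_exp_neg_mul_Ioi {x : ℝ} (hx : 0 < x) (c : ℝ) :
    ∫ t in Ioi c, exp (-(x * t)) = exp (-(x * c)) / x := by
  simp only [← neg_mul]
  rw [integral_exp_mul_Ioi (neg_neg_of_pos hx), neg_div_neg_eq]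

lemma integrableOn_exp_neg_mul_div_Ioi_one {x : ℝ} (hx : 0 < x) :
    IntegrableOn (fun t => exp (-(x * t)) / t) (Ioi 1) := by
  have hmeas : Measurable fun t => exp (-(x * t)) / t := by fun_prop
  refine (integrableOn_exp_neg_mul_Ioi hx 1).mono' hmeas.aestronglyMeasurable ?_
  filter_upwards [ae_restrict_mem measurableSet_Ioi] with t (ht : 1 < t)
  rw [norm_of_nonneg (by positivity)]
  exact div_le_self (exp_nonneg _) ht.le

lemma expIntE1_le {x : ℝ} (hx : 0 < x) : expIntE1 x ≤ exp (-x) / x := by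
  calc expIntE1 x ≤ ∫ t in Ioi (1 : ℝ), exp (-(x * t)) :=
        setIntegral_mono_on (integrableOn_exp_neg_mul_div_Ioi_one hx)
          (integrableOn_exp_neg_mul_Ioi hx 1) measurableSet_Ioi
          fun t (ht : 1 < t) => div_le_self (exp_nonneg _) ht.le
    _ = exp (-x) / x := by rw [integral_exp_neg_mul_Ioi hx, mul_one]

lemma exp_neg_div_add_one_le_expIntE1 {x : ℝ} (hx : 0 < x) :
    exp (-x) / (x + 1) ≤ expIntE1 x := by
  have hx1 : 0 < x + 1 := by linarith
  have hint : ∫ t in Ioi (1 : ℝ), exp 1 * exp (-((x + 1) * t)) = exp (-x) / (x + 1) := by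
    rw [integral_const_mul, integral_exp_neg_mul_Ioi hx1, mul_div_assoc', ← exp_add]
    ring_nf
  rw [← hint]
  refine setIntegral_mono_on ((integrableOn_exp_neg_mul_Ioi hx1 1).const_mul _)
    (integrableOn_exp_neg_mul_div_Ioi_one hx) measurableSet_Ioi fun t (ht : 1 < t) => ?_
  calc exp 1 * exp (-((x + 1) * t)) = exp (-(x * t)) * exp (1 - t) := by
        rw [← exp_add, ← exp_add]; ring_nf
    _ ≤ exp (-(x * t)) * t⁻¹ := by gcongr; exact exp_one_sub_le_inv (by linarith)
    _ = exp (-(x * t)) / t := (div_eq_mul_inv _ _).symm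

lemma tendsto_mul_exp_mul_expIntE1_atTop :
    Tendsto (fun x => x * exp x * expIntE1 x) atTop (nhds 1) := by
  have hlower : Tendsto (fun x : ℝ => (1 + x⁻¹)⁻¹) atTop (nhds 1) := by
    simpa using (tendsto_inv_atTop_zero.const_add (1 : ℝ)).inv₀ (by norm_num)
  refine tendsto_of_tendsto_of_tendsto_of_le_of_le' hlower tendsto_const_nhds ?_ ?_
  all_goals filter_upwards [eventually_gt_atTop 0] with x hx
  · calc (1 + x⁻¹)⁻¹ = x * exp x * (exp (-x) / (x + 1)) := by
          rw [exp_neg]; field_simp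
      _ ≤ x * exp x * expIntE1 x := by gcongr; exact exp_neg_div_add_one_le_expIntE1 hx
  · calc x * exp x * expIntE1 x ≤ x * exp x * (exp (-x) / x) := by gcongr; exact expIntE1_le hx
      _ = 1 := by rw [exp_neg]; field_simp

lemma tendsto_cachingT {m : ℝ} (hm : |1 - m| < 1) :
    Tendsto (cachingT m) atTop (nhds ((1 - m) / m)) := by
  have hpow := tendsto_pow_atTop_nhds_zero_of_abs_lt_one hm
  have h := ((hpow.const_sub 1).const_mul (1 - m)).div_const m
  rwa [sub_zero, mul_one] at h

/-- The baseline sum content delivery rate converges to `γ m / (1-m)`. -/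
theorem baseline_rate_tendsto (γ m : ℝ) (hγ : 0 < γ) (hm0 : 0 < m) (hm1 : m < 1) :
    Tendsto (fun K : ℕ =>
        ((K : ℝ) / cachingT m K) * Real.exp ((K : ℝ) / γ) * expIntE1 ((K : ℝ) / γ))
      atTop (nhds (γ * m / (1 - m))) := by
  have hT := tendsto_cachingT (m := m) (abs_sub_lt_iff.mpr ⟨by linarith, by linarith⟩)
  have hx : Tendsto (fun K : ℕ => (K : ℝ) / γ) atTop atTop :=
    tendsto_natCast_atTop_atTop.atTop_div_const hγ
  have hm : 0 < 1 - m := by linarith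
  have hlim := ((tendsto_const_nhds (x := γ)).div hT (by positivity)).mul
    (tendsto_mul_exp_mul_expIntE1_atTop.comp hx)
  convert hlim using 2 with K
  · simp only [Pi.div_apply, Function.comp_apply]
    field_simp
  · field_simp
end
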